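/- Let G be a simple graph on n vertices. Then mcut(G) ≤ (n/4)·s_Q(G), where s_Q(G) = q_1(G) - q_n(G) is the spread of the signless Laplacian matrix. -/

import Mathlib

open Finset Matrix BigOperators

set_option linter.unusedSectionVars false

variable {V : Type*} [Fintype V] [DecidableEq V]

/-- Number of edges of `G` with exactly one endpoint in `S` (each unordered edge counted once,
as the ordered pair going out of `S`). -/
def cutNum (G : SimpleGraph V) [DecidableRel G.Adj] (S : Finset V) : ℕ :=
  (Finset.univ.filter (fun p : V × V => G.Adj p.1 p.2 ∧ p.1 ∈ S ∧ p.2 ∉ S)).card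

/-- Number of edges of `G` with both endpoints in `S` or both outside `S`. -/
def cohNum (G : SimpleGraph V) [DecidableRel G.Adj] (S : Finset V) : ℕ :=
  G.edgeFinset.card - cutNum G S

/-- The maximum cut of `G`. -/
def mcut (G : SimpleGraph V) [DecidableRel G.Adj] : ℕ :=
  Finset.univ.sup (fun S : Finset V => cutNum G S)

/-- The ±1 partition vector of a vertex subset `S`. -/
def pvec (S : Finset V) : V → ℝ := fun v => if v ∈ S then 1 else -1

/-- The signless Laplacian matrix `Q = D + A` of a graph. -/
def signlessLap (G : SimpleGraph V) [DecidableRel G.Adj] : Matrix V V ℝ :=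
  G.degMatrix ℝ + G.adjMatrix ℝ

lemma isHermitian_adj (G : SimpleGraph V) [DecidableRel G.Adj] :
    (G.adjMatrix ℝ).IsHermitian := by
  rw [IsHermitian, conjTranspose_eq_transpose_of_trivial]
  exact SimpleGraph.isSymm_adjMatrix G

lemma isHermitian_lap (G : SimpleGraph V) [DecidableRel G.Adj] :
    (G.lapMatrix ℝ).IsHermitian := by
  rw [IsHermitian, conjTranspose_eq_transpose_of_trivial]
  exact SimpleGraph.isSymm_lapMatrix (R := ℝ) (G := G)

lemma isHermitian_signlessLap (G : SimpleGraph V) [DecidableRel G.Adj] :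
    (signlessLap G).IsHermitian := by
  rw [IsHermitian, conjTranspose_eq_transpose_of_trivial]
  exact (SimpleGraph.isSymm_degMatrix (R := ℝ) (G := G)).add (SimpleGraph.isSymm_adjMatrix G)

/-- The spanning subgraph of `G` consisting of the edges between `S` and its complement. -/
def crossGraph (G : SimpleGraph V) (S : Finset V) : SimpleGraph V where
  Adj u v := G.Adj u v ∧ ((u ∈ S) ↔ (v ∉ S))
  symm := ⟨fun u v h => ⟨h.1.symm, by tauto⟩⟩
  loopless := ⟨fun v h => G.loopless.irrefl v h.1⟩

/-- The spanning subgraph of `G` consisting of the edges inside `S` or inside its complement. -/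
def insideGraph (G : SimpleGraph V) (S : Finset V) : SimpleGraph V where
  Adj u v := G.Adj u v ∧ ((u ∈ S) ↔ (v ∈ S))
  symm := ⟨fun u v h => ⟨h.1.symm, h.2.symm⟩⟩
  loopless := ⟨fun v h => G.loopless.irrefl v h.1⟩

instance (G : SimpleGraph V) [DecidableRel G.Adj] (S : Finset V) :
    DecidableRel (crossGraph G S).Adj := fun u v => inferInstanceAs (Decidable (G.Adj u v ∧ ((u ∈ S) ↔ (v ∉ S))))

instance (G : SimpleGraph V) [DecidableRel G.Adj] (S : Finset V) :
    DecidableRel (insideGraph G S).Adj := fun u v => inferInstanceAs (Decidable (G.Adj u v ∧ ((u ∈ S) ↔ (v ∈ S))))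

/-- The second largest value (with multiplicity) of a finitely indexed family of reals. -/
noncomputable def secondLargest (f : V → ℝ) : ℝ :=
  (Multiset.sort (Finset.univ.val.map f) (· ≤ ·)).getD (Fintype.card V - 2) 0

/-- The join of two graphs: disjoint union plus all edges in between. -/
def joinGraph {α β : Type*} (H₁ : SimpleGraph α) (H₂ : SimpleGraph β) :
    SimpleGraph (α ⊕ β) where
  Adj x y :=
    match x, y with
    | Sum.inl u, Sum.inl v => H₁.Adj u v
    | Sum.inr u, Sum.inr v => H₂.Adj u v
    | Sum.inl _, Sum.inr _ => True
    | Sum.inr _, Sum.inl _ => True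
  symm := ⟨by rintro (u | u) (v | v) h <;> first | exact h.symm | trivial⟩
  loopless := ⟨by
    rintro (u | u) h
    · exact H₁.loopless.irrefl u h
    · exact H₂.loopless.irrefl u h⟩

instance {α β : Type*} (H₁ : SimpleGraph α) (H₂ : SimpleGraph β)
    [DecidableRel H₁.Adj] [DecidableRel H₂.Adj] :
    DecidableRel (joinGraph H₁ H₂).Adj := fun x y =>
  match x, y with
  | Sum.inl u, Sum.inl v => inferInstanceAs (Decidable (H₁.Adj u v))
  | Sum.inr u, Sum.inr v => inferInstanceAs (Decidable (H₂.Adj u v))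
  | Sum.inl _, Sum.inr _ => inferInstanceAs (Decidable True)
  | Sum.inr _, Sum.inl _ => inferInstanceAs (Decidable True)


/-!
For the `±1` indicator vector `x` of a vertex set `S`, `xᵀ x = n` and
`xᵀ Q x = ∑_{uv ∈ E} (x_u + x_v)² = 4 (m - cut(S))`, since an edge contributes `4` when it is not
cut and `0` when it is. The Rayleigh bounds `qₙ xᵀx ≤ xᵀQx ≤ q₁ xᵀx` applied to the all-ones
vector give `4m ≤ n q₁`, and applied to the indicator vector of a maximum cut they give
`n qₙ ≤ 4m - 4 mcut(G)`; subtracting yields the theorem.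
-/

namespace Matrix.IsHermitian

variable {n : Type*} [Fintype n] [DecidableEq n] {A : Matrix n n ℝ} (hA : A.IsHermitian)
  (x : n → ℝ)

lemma star_eigenvectorUnitary_mulVec_eq_vecMul :
    star (hA.eigenvectorUnitary : Matrix n n ℝ) *ᵥ x = x ᵥ* hA.eigenvectorUnitary := by
  rw [star_eq_conjTranspose, conjTranspose_eq_transpose_of_trivial, mulVec_transpose]

lemma dotProduct_mulVec_eq_sum_eigenvalues :
    x ⬝ᵥ (A *ᵥ x) =
      ∑ i, hA.eigenvalues i * (star (hA.eigenvectorUnitary : Matrix n n ℝ) *ᵥ x) i ^ 2 := by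
  conv_lhs => rw [hA.spectral_theorem, Unitary.conjStarAlgAut_apply]
  rw [← mulVec_mulVec, ← mulVec_mulVec, dotProduct_mulVec,
    ← star_eigenvectorUnitary_mulVec_eq_vecMul]
  simp only [dotProduct, mulVec_diagonal, Function.comp_apply, RCLike.ofReal_real_eq_id, id_eq]
  exact sum_congr rfl fun i _ => by ring

lemma dotProduct_self_eq_sum_sq :
    x ⬝ᵥ x = ∑ i, (star (hA.eigenvectorUnitary : Matrix n n ℝ) *ᵥ x) i ^ 2 := by
  have hU : (hA.eigenvectorUnitary : Matrix n n ℝ) * star (hA.eigenvectorUnitary : Matrix n n ℝ) =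
      1 := Unitary.mul_star_self_of_mem hA.eigenvectorUnitary.2
  simp only [sq, ← dotProduct.eq_1]
  conv_rhs => enter [1]; rw [star_eigenvectorUnitary_mulVec_eq_vecMul]
  rw [← dotProduct_mulVec, mulVec_mulVec, hU, one_mulVec]

lemma iInf_eigenvalues_mul_le : (⨅ i, hA.eigenvalues i) * (x ⬝ᵥ x) ≤ x ⬝ᵥ (A *ᵥ x) := by
  rw [hA.dotProduct_self_eq_sum_sq, hA.dotProduct_mulVec_eq_sum_eigenvalues, mul_sum]
  exact sum_le_sum fun i _ ↦
    mul_le_mul_of_nonneg_right (ciInf_le (Finite.bddBelow_range _) i) (sq_nonneg _)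

lemma le_iSup_eigenvalues_mul : x ⬝ᵥ (A *ᵥ x) ≤ (⨆ i, hA.eigenvalues i) * (x ⬝ᵥ x) := by
  rw [hA.dotProduct_self_eq_sum_sq, hA.dotProduct_mulVec_eq_sum_eigenvalues, mul_sum]
  exact sum_le_sum fun i _ ↦
    mul_le_mul_of_nonneg_right (le_ciSup (Finite.bddAbove_range _) i) (sq_nonneg _)

end Matrix.IsHermitian

lemma pvec_mul_self (S : Finset V) (v : V) : pvec S v * pvec S v = 1 := by
  unfold pvec; split_ifs <;> norm_num

lemma pvec_mul_pvec (S : Finset V) (u v : V) :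
    pvec S u * pvec S v =
      1 - 2 * (if u ∈ S ∧ v ∉ S then 1 else 0) - 2 * (if v ∈ S ∧ u ∉ S then 1 else 0) := by
  unfold pvec; by_cases hu : u ∈ S <;> by_cases hv : v ∈ S <;> simp [hu, hv] <;> norm_num

lemma dotProduct_pvec_self (S : Finset V) : pvec S ⬝ᵥ pvec S = Fintype.card V := by
  simp [dotProduct, pvec_mul_self]

section

variable (G : SimpleGraph V) [DecidableRel G.Adj]

lemma cutNum_univ : cutNum G univ = 0 := by
  simp [cutNum]

lemma cutNum_eq_sum (S : Finset V) :
    (cutNum G S : ℝ) = ∑ u, ∑ v, if G.Adj u v ∧ u ∈ S ∧ v ∉ S then 1 else 0 := by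
  rw [cutNum, natCast_card_filter, ← univ_product_univ, sum_product]

lemma cutNum_eq_sum_swap (S : Finset V) :
    (cutNum G S : ℝ) = ∑ u, ∑ v, if G.Adj u v ∧ v ∈ S ∧ u ∉ S then 1 else 0 := by
  rw [cutNum_eq_sum, sum_comm]
  simp only [G.adj_comm]

lemma sum_sum_adj_eq_two_mul_card_edgeFinset :
    (∑ u, ∑ v, if G.Adj u v then 1 else 0 : ℝ) = 2 * #G.edgeFinset := by
  simp_rw [← SimpleGraph.degree_eq_sum_if_adj]
  exact_mod_cast G.sum_degrees_eq_twice_card_edges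

lemma dotProduct_degMatrix_mulVec_pvec (S : Finset V) :
    pvec S ⬝ᵥ (G.degMatrix ℝ *ᵥ pvec S) = 2 * #G.edgeFinset := by
  simp_rw [SimpleGraph.dotProduct_mulVec_degMatrix, mul_assoc, pvec_mul_self, mul_one]
  exact_mod_cast G.sum_degrees_eq_twice_card_edges

lemma dotProduct_adjMatrix_mulVec_pvec (S : Finset V) :
    pvec S ⬝ᵥ (G.adjMatrix ℝ *ᵥ pvec S) = 2 * #G.edgeFinset - 4 * cutNum G S := by
  have hterm : ∀ u v, (if G.Adj u v then pvec S u * pvec S v else 0) =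
      (if G.Adj u v then 1 else 0) - 2 * (if G.Adj u v ∧ u ∈ S ∧ v ∉ S then 1 else 0)
        - 2 * (if G.Adj u v ∧ v ∈ S ∧ u ∉ S then 1 else 0) := fun u v ↦ by
    by_cases h : G.Adj u v <;> simp [h, pvec_mul_pvec]
  simp only [SimpleGraph.dotProduct_mulVec_adjMatrix, hterm, sum_sub_distrib, ← mul_sum]
  rw [← cutNum_eq_sum, ← cutNum_eq_sum_swap, sum_sum_adj_eq_two_mul_card_edgeFinset]
  ring

lemma dotProduct_signlessLap_mulVec_pvec (S : Finset V) :
    pvec S ⬝ᵥ (signlessLap G *ᵥ pvec S) = 4 * #G.edgeFinset - 4 * cutNum G S := by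
  rw [signlessLap, add_mulVec, dotProduct_add, dotProduct_degMatrix_mulVec_pvec,
    dotProduct_adjMatrix_mulVec_pvec]
  ring

end

/-- `mcut(G) ≤ (n/4)·s_Q(G)` where `s_Q` is the signless Laplacian spread. -/
theorem stmt6 (G : SimpleGraph V) [DecidableRel G.Adj] :
    (mcut G : ℝ) ≤ (Fintype.card V : ℝ) / 4 * ((⨆ i, (isHermitian_signlessLap G).eigenvalues i) - (⨅ i, (isHermitian_signlessLap G).eigenvalues i)) := by
  obtain ⟨S, -, hS⟩ := exists_mem_eq_sup univ univ_nonempty (cutNum G)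
  have hQ := isHermitian_signlessLap G
  have hmax := hQ.le_iSup_eigenvalues_mul (pvec univ)
  have hmin := hQ.iInf_eigenvalues_mul_le (pvec S)
  rw [dotProduct_pvec_self, dotProduct_signlessLap_mulVec_pvec] at hmax hmin
  rw [cutNum_univ, Nat.cast_zero] at hmax
  rw [mcut, hS]
  linarith
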